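/- arXiv:2012.02387 — 3 statements merged into one kernel-verified Lean document; each statement's English description precedes it below -/
import Mathlib

section
/- Let J : ℝⁿ → ℝ be continuously differentiable with ∇J Lipschitz with constant L > 0, and let 0 < α ≤ 1/(3L). Define g(θ) = (1/2)·(∇J(θ) + ∇J(θ - α·∇J(θ))) and θ' = θ - α·g(θ). Then J(θ') ≤ J(θ). -/
/-!
By the descent lemma, `J (θ - d) ≤ J θ - ⟪∇J θ, d⟫ + (L/2) ‖d‖²` for every step `d`, so it suffices
that the quadratic term is dominated by the linear one for `d = α g(θ)`. Writing `u = ∇J θ` and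
`v = ∇J (θ - α u)`, the Lipschitz bound gives `‖v - u‖ ≤ α L ‖u‖ ≤ ‖u‖ / 3`; hence `v` is a small
perturbation of `u`, so `⟪u, u + v⟫ ≥ (5/3) ‖u‖²` while `‖u + v‖ ≤ (7/3) ‖u‖`, and `α L ≤ 1/3`
makes the quadratic term at most `49/216 · α ‖u‖²`, well below the linear term `≥ 5/6 · α ‖u‖²`.
-/

open InnerProductSpace Gradient

variable {E : Type*} [NormedAddCommGroup E] [InnerProductSpace ℝ E]

theorem hasDerivAt_comp_sub_smul_of_hasGradientAt [CompleteSpace E] {f : E → ℝ} {g x d : E}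
    {t : ℝ} (hf : HasGradientAt f g (x - t • d)) :
    HasDerivAt (fun s : ℝ => f (x - s • d)) (-⟪g, d⟫_ℝ) t := by
  have hline : HasDerivAt (fun s : ℝ => x - s • d) (-d) t := by
    simpa using ((hasDerivAt_id t).smul_const d).const_sub x
  have := hf.hasFDerivAt.comp_hasDerivAt t hline
  simp only [Function.comp_def, map_neg, toDual_apply_apply] at this
  exact this

theorem le_sub_inner_gradient_add_sq_of_lipschitz [CompleteSpace E] {f : E → ℝ}
    (hf : Differentiable ℝ f) {L : ℝ} (hLip : ∀ x y, ‖∇ f x - ∇ f y‖ ≤ L * ‖x - y‖) (x d : E) :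
    f (x - d) ≤ f x - ⟪∇ f x, d⟫_ℝ + L / 2 * ‖d‖ ^ 2 := by
  have hderiv (t : ℝ) : HasDerivAt (fun s : ℝ => f (x - s • d)) (-⟪∇ f (x - t • d), d⟫_ℝ) t :=
    hasDerivAt_comp_sub_smul_of_hasGradientAt (hf _).hasGradientAt
  have hquad (t : ℝ) : HasDerivAt (fun s : ℝ => f x - s * ⟪∇ f x, d⟫_ℝ + L / 2 * ‖d‖ ^ 2 * s ^ 2)
      (-⟪∇ f x, d⟫_ℝ + L * t * ‖d‖ ^ 2) t :=
    ((((hasDerivAt_id' t).mul_const _).const_sub (f x)).fun_add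
      ((hasDerivAt_pow 2 t).const_mul _)).congr_deriv (by norm_num; ring)
  have hbound (t : ℝ) (ht : 0 ≤ t) :
      -⟪∇ f (x - t • d), d⟫_ℝ ≤ -⟪∇ f x, d⟫_ℝ + L * t * ‖d‖ ^ 2 := by
    have hgrad : ⟪∇ f x - ∇ f (x - t • d), d⟫_ℝ ≤ L * t * ‖d‖ ^ 2 :=
      calc ⟪∇ f x - ∇ f (x - t • d), d⟫_ℝ ≤ ‖∇ f x - ∇ f (x - t • d)‖ * ‖d‖ :=
            real_inner_le_norm _ _
        _ ≤ L * ‖t • d‖ * ‖d‖ := by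
            gcongr
            simpa only [sub_sub_cancel] using hLip x (x - t • d)
        _ = L * t * ‖d‖ ^ 2 := by rw [norm_smul, Real.norm_of_nonneg ht]; ring
    rw [inner_sub_left] at hgrad
    linarith
  have := image_le_of_deriv_right_le_deriv_boundary (a := 0) (b := 1)
    (fun t _ => (hderiv t).continuousAt.continuousWithinAt)
    (fun t _ => (hderiv t).hasDerivWithinAt) (by simp)
    (fun t _ => (hquad t).continuousAt.continuousWithinAt)
    (fun t _ => (hquad t).hasDerivWithinAt) (fun t ht => hbound t ht.1)
    (Set.right_mem_Icc.2 zero_le_one)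
  simpa using this

theorem sq_norm_smul_half_add_le_inner {u v : E} {α L : ℝ} (hα : 0 ≤ α) (hαL : α * L ≤ 1 / 3)
    (huv : ‖v - u‖ ≤ L * ‖α • u‖) :
    L / 2 * ‖α • ((1 / 2 : ℝ) • (u + v))‖ ^ 2 ≤ ⟪u, α • ((1 / 2 : ℝ) • (u + v))⟫_ℝ := by
  have hvu : ‖v - u‖ ≤ ‖u‖ / 3 := by
    rw [norm_smul, Real.norm_of_nonneg hα] at huv
    nlinarith [norm_nonneg u]
  have hinner : 5 / 3 * ‖u‖ ^ 2 ≤ ⟪u, u + v⟫_ℝ := by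
    have hsplit : ⟪u, u + v⟫_ℝ = 2 * ‖u‖ ^ 2 + ⟪u, v - u⟫_ℝ := by
      rw [inner_add_right, inner_sub_right, real_inner_self_eq_norm_sq]; ring
    have := neg_le_of_abs_le (abs_real_inner_le_norm u (v - u))
    nlinarith [norm_nonneg u]
  have hnorm : ‖u + v‖ ≤ 7 / 3 * ‖u‖ := by
    linarith [norm_add_le u v, norm_le_norm_add_norm_sub' v u]
  rw [norm_smul, norm_smul, Real.norm_of_nonneg hα, Real.norm_of_nonneg (by norm_num),
    inner_smul_right, inner_smul_right]
  calc L / 2 * (α * (1 / 2 * ‖u + v‖)) ^ 2 = α * L * (α * ‖u + v‖ ^ 2) / 8 := by ring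
    _ ≤ 1 / 3 * (α * (7 / 3 * ‖u‖) ^ 2) / 8 := by gcongr
    _ ≤ α * (1 / 2 * (5 / 3 * ‖u‖ ^ 2)) := by nlinarith [mul_nonneg hα (sq_nonneg ‖u‖)]
    _ ≤ α * (1 / 2 * ⟪u, u + v⟫_ℝ) := by gcongr

theorem grad_avg_step_monotone_general {n : ℕ} (J : EuclideanSpace ℝ (Fin n) → ℝ)
    (hJ : ContDiff ℝ 1 J) (L : ℝ)
    (hLip : ∀ x y, ‖gradient J x - gradient J y‖ ≤ L * ‖x - y‖)
    (α : ℝ) (hα : 0 < α) (hα' : α ≤ 1 / (3 * L))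
    (θ : EuclideanSpace ℝ (Fin n)) :
    J (θ - α • ((1 / 2 : ℝ) • (gradient J θ + gradient J (θ - α • gradient J θ)))) ≤ J θ := by
  have hL : 0 < L := by
    have := one_div_pos.mp (hα.trans_le hα')
    linarith
  have hαL : α * L ≤ 1 / 3 := by
    rw [le_div_iff₀ (by positivity)] at hα'
    linarith
  have hstep := sq_norm_smul_half_add_le_inner hα.le hαL
    (by simpa only [sub_sub_cancel_left, norm_neg] using hLip (θ - α • gradient J θ) θ)
  have hdescent := le_sub_inner_gradient_add_sq_of_lipschitz (hJ.differentiable one_ne_zero) hLip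
    θ (α • ((1 / 2 : ℝ) • (gradient J θ + gradient J (θ - α • gradient J θ))))
  linarith

theorem grad_avg_step_monotone {n : ℕ} (J : EuclideanSpace ℝ (Fin n) → ℝ)
    (hJ : ContDiff ℝ 1 J) (L : ℝ) (hL : 0 < L)
    (hLip : ∀ x y, ‖gradient J x - gradient J y‖ ≤ L * ‖x - y‖)
    (α : ℝ) (hα : 0 < α) (hα' : α ≤ 1 / (3 * L))
    (θ : EuclideanSpace ℝ (Fin n)) :
    J (θ - α • ((1 / 2 : ℝ) • (gradient J θ + gradient J (θ - α • gradient J θ)))) ≤ J θ :=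
  grad_avg_step_monotone_general J hJ L hLip α hα hα' θ
end

section
/- Let J : ℝⁿ → ℝ be C¹ with ∇J Lipschitz with constant L > 0, let 0 < α ≤ 1/(3L), and let (θ_n) be the Grad-Avg iterates θ_{n+1} = θ_n - (α/2)(∇J(θ_n) + ∇J(θ_n - α∇J(θ_n))). Then the sequence (J(θ_n)) is monotone nonincreasing. -/
/-!
With `g = ∇J x` and `h = ∇J (x - α g)`, one Grad-Avg step moves `x` to `x - (α/2)(g + h)`.
Lipschitz continuity of the gradient gives `‖h - g‖ ≤ c ‖g‖` with `c = αL ≤ 1/3`, hence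
`⟪g, g + h⟫ ≥ (2 - c) ‖g‖²` and `‖g + h‖ ≤ (2 + c) ‖g‖`. Inserted into the descent lemma
`J y ≤ J x + ⟪∇J x, y - x⟫ + (L/2) ‖y - x‖²`, these bound the change of the objective by
`-(α/8) (4(2 - c) - c(2 + c)²) ‖g‖² ≤ 0`.
-/

open scoped RealInnerProductSpace

section

variable {E : Type*} [NormedAddCommGroup E] [InnerProductSpace ℝ E]

section

variable {g h : E} {c : ℝ}

theorem two_sub_mul_sq_le_inner_add (hgh : ‖h - g‖ ≤ c * ‖g‖) :
    (2 - c) * ‖g‖ ^ 2 ≤ ⟪g, g + h⟫ := by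
  have hsplit : ⟪g, g + h⟫ = 2 * ‖g‖ ^ 2 + ⟪g, h - g⟫ := by
    rw [inner_add_right, inner_sub_right, real_inner_self_eq_norm_sq]; ring
  have := neg_le_of_abs_le (abs_real_inner_le_norm g (h - g))
  nlinarith [norm_nonneg g]

theorem norm_add_le_two_add_mul (hgh : ‖h - g‖ ≤ c * ‖g‖) : ‖g + h‖ ≤ (2 + c) * ‖g‖ :=
  calc ‖g + h‖ = ‖(2 : ℝ) • g + (h - g)‖ := by congr 1; rw [two_smul]; abel
    _ ≤ 2 * ‖g‖ + c * ‖g‖ := by grw [norm_add_le, norm_smul, Real.norm_two, hgh]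
    _ = (2 + c) * ‖g‖ := by ring

end

variable [CompleteSpace E] {J : E → ℝ} {L α : ℝ}

theorem le_add_inner_gradient_add_mul_norm_sq (hJ : Differentiable ℝ J)
    (hLip : ∀ x y, ‖gradient J x - gradient J y‖ ≤ L * ‖x - y‖) (x y : E) :
    J y ≤ J x + ⟪gradient J x, y - x⟫ + L / 2 * ‖y - x‖ ^ 2 := by
  set v := y - x
  let φ : ℝ → ℝ := fun t ↦ J (x + t • v) - t * ⟪gradient J x, v⟫ - L / 2 * t ^ 2 * ‖v‖ ^ 2
  have hφ (t : ℝ) :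
      HasDerivAt φ (⟪gradient J (x + t • v) - gradient J x, v⟫ - L * t * ‖v‖ ^ 2) t := by
    have hline : HasDerivAt (fun s : ℝ ↦ x + s • v) v t := by
      simpa using ((hasDerivAt_id t).smul_const v).const_add x
    have hJline := (hJ (x + t • v)).hasGradientAt.hasFDerivAt.comp_hasDerivAt t hline
    refine ((hJline.sub ((hasDerivAt_id t).mul_const ⟪gradient J x, v⟫)).sub
      (((hasDerivAt_pow 2 t).const_mul (L / 2)).mul_const (‖v‖ ^ 2))).congr_deriv ?_
    rw [InnerProductSpace.toDual_apply_apply, inner_sub_left]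
    push_cast
    ring
  have hφ_nonpos : ∀ t ∈ interior (Set.Icc (0 : ℝ) 1),
      ⟪gradient J (x + t • v) - gradient J x, v⟫ - L * t * ‖v‖ ^ 2 ≤ 0 := by
    intro t ht
    rw [interior_Icc] at ht
    have := calc ⟪gradient J (x + t • v) - gradient J x, v⟫
        ≤ ‖gradient J (x + t • v) - gradient J x‖ * ‖v‖ := real_inner_le_norm _ _
      _ ≤ L * ‖x + t • v - x‖ * ‖v‖ := by gcongr; exact hLip _ _
      _ = L * t * ‖v‖ ^ 2 := by
        rw [add_sub_cancel_left, norm_smul, Real.norm_of_nonneg ht.1.le]; ring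
    linarith
  have hanti : AntitoneOn φ (Set.Icc 0 1) :=
    antitoneOn_of_hasDerivWithinAt_nonpos (convex_Icc 0 1)
      (fun t _ ↦ (hφ t).continuousAt.continuousWithinAt)
      (fun t _ ↦ (hφ t).hasDerivWithinAt) hφ_nonpos
  have := hanti (Set.left_mem_Icc.2 zero_le_one) (Set.right_mem_Icc.2 zero_le_one) zero_le_one
  simp only [φ, v, zero_smul, one_smul, add_zero, add_sub_cancel, zero_mul, one_mul, sub_zero,
    one_pow] at this
  linarith

variable (J α) in
noncomputable def gradAvgStep (x : E) : E :=
  x - (α / 2) • (gradient J x + gradient J (x - α • gradient J x))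

theorem apply_gradAvgStep_le (hJ : Differentiable ℝ J)
    (hLip : ∀ x y, ‖gradient J x - gradient J y‖ ≤ L * ‖x - y‖)
    (hL : 0 ≤ L) (hα : 0 ≤ α) (hαL : α * L ≤ 1 / 3) (x : E) :
    J (gradAvgStep J α x) ≤ J x := by
  set g := gradient J x
  set h := gradient J (x - α • g)
  have hgh : ‖h - g‖ ≤ α * L * ‖g‖ :=
    calc ‖h - g‖ ≤ L * ‖x - α • g - x‖ := hLip _ _
      _ = α * L * ‖g‖ := by
        rw [sub_sub_cancel_left, norm_neg, norm_smul, Real.norm_of_nonneg hα]; ring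
  have hinner := two_sub_mul_sq_le_inner_add hgh
  have hnorm := norm_add_le_two_add_mul hgh
  have hdesc := le_add_inner_gradient_add_mul_norm_sq hJ hLip x (x - (α / 2) • (g + h))
  rw [sub_sub_cancel_left, inner_neg_right, norm_neg, real_inner_smul_right, norm_smul,
    Real.norm_of_nonneg (by positivity)] at hdesc
  set c := α * L
  have hc : 0 ≤ c := mul_nonneg hα hL
  calc J (x - (α / 2) • (g + h))
      ≤ J x - α / 2 * ⟪g, g + h⟫ + L / 2 * (α / 2 * ‖g + h‖) ^ 2 := by linarith
    _ ≤ J x - α / 2 * ((2 - c) * ‖g‖ ^ 2) + L / 2 * (α / 2 * ((2 + c) * ‖g‖)) ^ 2 := by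
      gcongr
    _ = J x - α / 8 * (4 * (2 - c) - c * (2 + c) ^ 2) * ‖g‖ ^ 2 := by ring
    _ ≤ J x := by
      have hpoly : 0 ≤ 4 * (2 - c) - c * (2 + c) ^ 2 := by nlinarith
      exact sub_le_self _ (mul_nonneg (mul_nonneg (by positivity) hpoly) (sq_nonneg _))

end

theorem grad_avg_objective_antitone {n : ℕ} (J : EuclideanSpace ℝ (Fin n) → ℝ)
    (hJ : ContDiff ℝ 1 J) (L : ℝ) (hL : 0 < L)
    (hLip : ∀ x y, ‖gradient J x - gradient J y‖ ≤ L * ‖x - y‖)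
    (α : ℝ) (hα : 0 < α) (hα' : α ≤ 1 / (3 * L))
    (θ : ℕ → EuclideanSpace ℝ (Fin n))
    (hrec : ∀ k, θ (k + 1) =
      θ k - (α / 2) • (gradient J (θ k) + gradient J (θ k - α • gradient J (θ k)))) :
    Antitone fun k => J (θ k) := by
  have hαL : α * L ≤ 1 / 3 :=
    calc α * L ≤ 1 / (3 * L) * L := by gcongr
      _ = 1 / 3 := by field_simp
  refine antitone_nat_of_succ_le fun k ↦ ?_
  rw [hrec k]
  exact apply_gradAvgStep_le (hJ.differentiable one_ne_zero) hLip hL.le hα.le hαL (θ k)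
end

section
/- Let J : ℝⁿ → ℝ be continuously differentiable with ∇J Lipschitz with constant L, and α > 0. For the Grad-Avg averaged gradient g(θ) = (1/2)(∇J(θ) + ∇J(θ - α∇J(θ))), we have ⟪∇J(θ), g(θ)⟫ ≥ (1 - αL/2)·‖∇J(θ)‖²; in particular, for α < 2/L the Grad-Avg direction is a descent direction wherever ∇J(θ) ≠ 0. -/
open scoped RealInnerProductSpace

theorem le_inner_midpoint_of_norm_sub_le {E : Type*} [NormedAddCommGroup E]
    [InnerProductSpace ℝ E] {g g' : E} {c : ℝ} (h : ‖g' - g‖ ≤ c * ‖g‖) :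
    (1 - c / 2) * ‖g‖ ^ 2 ≤ ⟪g, (1 / 2 : ℝ) • (g + g')⟫ := by
  have hsplit : ⟪g, (1 / 2 : ℝ) • (g + g')⟫ = ‖g‖ ^ 2 + (1 / 2) * ⟪g, g' - g⟫ := by
    rw [real_inner_smul_right, inner_add_right, inner_sub_right, real_inner_self_eq_norm_sq]
    ring
  have hcs : -(‖g‖ * (c * ‖g‖)) ≤ ⟪g, g' - g⟫ :=
    calc -(‖g‖ * (c * ‖g‖)) ≤ -(‖g‖ * ‖g' - g‖) := by gcongr
      _ ≤ ⟪g, g' - g⟫ := neg_le_of_abs_le (abs_real_inner_le_norm _ _)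
  rw [hsplit]
  linarith

theorem grad_avg_descent_direction_general {n : ℕ}
    (J : EuclideanSpace ℝ (Fin n) → ℝ) (L : ℝ) (hL : 0 < L)
    (hLip : ∀ x y, ‖gradient J x - gradient J y‖ ≤ L * ‖x - y‖)
    (α : ℝ) (hα : 0 < α) (θ : EuclideanSpace ℝ (Fin n)) :
    ⟪gradient J θ, (1 / 2 : ℝ) • (gradient J θ + gradient J (θ - α • gradient J θ))⟫ ≥
        (1 - α * L / 2) * ‖gradient J θ‖ ^ 2 ∧
      (α < 2 / L → gradient J θ ≠ 0 →
        0 < ⟪gradient J θ,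
          (1 / 2 : ℝ) • (gradient J θ + gradient J (θ - α • gradient J θ))⟫) := by
  set g := gradient J θ
  have hstep : ‖gradient J (θ - α • g) - g‖ ≤ α * L * ‖g‖ :=
    calc ‖gradient J (θ - α • g) - g‖ ≤ L * ‖(θ - α • g) - θ‖ := hLip _ _
      _ = α * L * ‖g‖ := by
        rw [sub_sub_cancel_left, norm_neg, norm_smul, Real.norm_of_nonneg hα.le]
        ring
  have hbound := le_inner_midpoint_of_norm_sub_le hstep
  refine ⟨hbound, fun hα2 hg => hbound.trans_lt' ?_⟩
  have hαL : α * L < 2 := (lt_div_iff₀ hL).mp hα2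
  have : 0 < ‖g‖ := norm_pos_iff.mpr hg
  have : 0 < 1 - α * L / 2 := by linarith
  positivity

theorem grad_avg_descent_direction {n : ℕ}
    (J : EuclideanSpace ℝ (Fin n) → ℝ) (hJ : ContDiff ℝ 1 J) (L : ℝ) (hL : 0 < L)
    (hLip : ∀ x y, ‖gradient J x - gradient J y‖ ≤ L * ‖x - y‖)
    (α : ℝ) (hα : 0 < α) (θ : EuclideanSpace ℝ (Fin n)) :
    ⟪gradient J θ, (1 / 2 : ℝ) • (gradient J θ + gradient J (θ - α • gradient J θ))⟫ ≥
        (1 - α * L / 2) * ‖gradient J θ‖ ^ 2 ∧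
      (α < 2 / L → gradient J θ ≠ 0 →
        0 < ⟪gradient J θ,
          (1 / 2 : ℝ) • (gradient J θ + gradient J (θ - α • gradient J θ))⟫) :=
  grad_avg_descent_direction_general J L hL hLip α hα θ
end
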